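/- Let k be a field. For all objects X, Y of 𝓠(k) and every morphism φ : L(X) → L(Y) in 𝓠(k)[W⁻¹], there exist a hyperbolic space H and a morphism f : X → Y ⊥ H of 𝓠(k) such that φ = (L(ι_Y))⁻¹ ∘ L(f), where ι_Y : Y → Y ⊥ H is the canonical inclusion (which belongs to W, so that L(ι_Y) is invertible). -/

import Mathlib

open CategoryTheory

noncomputable section

namespace StableHomology

/-- An object of the category `𝓠(k)`: a finite-dimensional `k`-vector space equipped
with a quadratic form. -/
structure QuadSpace (k : Type) [Field k] : Type 1 where
  /-- the underlying vector space -/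
  carrier : Type
  [isAddCommGroup : AddCommGroup carrier]
  [isModule : Module k carrier]
  [isFinite : FiniteDimensional k carrier]
  /-- the quadratic form -/
  form : QuadraticForm k carrier

attribute [instance] QuadSpace.isAddCommGroup QuadSpace.isModule QuadSpace.isFinite

instance {k : Type} [Field k] : CoeSort (QuadSpace k) Type :=
  ⟨QuadSpace.carrier⟩

variable (k : Type) [Field k]

/-- A morphism of `𝓠(k)`: an injective linear map compatible with the quadratic forms. -/
@[ext]
structure QuadHom (X Y : QuadSpace k) : Type where
  /-- the underlying linear map -/
  toLinearMap : X →ₗ[k] Y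
  injective : Function.Injective toLinearMap
  compat : ∀ x : X, Y.form (toLinearMap x) = X.form x

instance : Category (QuadSpace k) where
  Hom X Y := QuadHom k X Y
  id X := ⟨LinearMap.id, fun _ _ h => h, fun _ => rfl⟩
  comp {X Y Z} f g := ⟨g.toLinearMap.comp f.toLinearMap, g.injective.comp f.injective,
    fun x => by
      show Z.form (g.toLinearMap (f.toLinearMap x)) = X.form x
      rw [g.compat, f.compat]⟩
  id_comp f := by apply QuadHom.ext; rfl
  comp_id f := by apply QuadHom.ext; rfl
  assoc f g h := by apply QuadHom.ext; rfl

/-- The orthogonal sum of two quadratic spaces. -/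
def orthSum (X Y : QuadSpace k) : QuadSpace k where
  carrier := X × Y
  form := QuadraticMap.prod X.form Y.form

/-- The hyperbolic plane `(k², (x, y) ↦ x y)`. -/
def hypPlane : QuadSpace k where
  carrier := k × k
  form := LinearMap.BilinMap.toQuadraticMap
    (LinearMap.mk₂ k (fun v w : k × k => v.1 * w.2)
      (fun _ _ _ => by simp [add_mul])
      (fun _ _ _ => by simp [mul_assoc])
      (fun _ _ _ => by simp [mul_add])
      (fun _ _ _ => by dsimp; ring))

/-- The hyperbolic space which is the orthogonal sum of `m` copies of the hyperbolic
plane. -/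
def hypSpace : ℕ → QuadSpace k
  | 0 => { carrier := PUnit, form := 0 }
  | (m + 1) => orthSum k (hypSpace m) (hypPlane k)

/-- The canonical inclusion `D → D ⊥ H`, `x ↦ (x, 0)`. -/
def orthIncl (D H : QuadSpace k) : D ⟶ orthSum k D H where
  toLinearMap := LinearMap.inl k D H
  injective := LinearMap.inl_injective
  compat x := by
    show QuadraticMap.prod D.form H.form (x, 0) = D.form x
    simp [QuadraticMap.prod_apply]

/-- The auxiliary inductive predicate singling out the canonical inclusions
`D → D ⊥ H` with `H` a hyperbolic space. -/
inductive IsHypIncl : ∀ (X Y : QuadSpace k), (X ⟶ Y) → Prop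
  | mk (D : QuadSpace k) (m : ℕ) :
      IsHypIncl D (orthSum k D (hypSpace k m)) (orthIncl k D (hypSpace k m))

/-- The class `W` of morphisms of `𝓠(k)` of the form `ι_D : D → D ⊥ H` with `H` a
hyperbolic space. -/
def Wq : MorphismProperty (QuadSpace k) := fun X Y f => IsHypIncl k X Y f


end StableHomology

/-!
A morphism of the form `L(f) ≫ L(ι_Y)⁻¹` is a "hyperbolic fraction". Every `L(f)` is one
(stabilise by `H = 0`), and so is every formal inverse `L(ι_D)⁻¹` (take `f = 𝟙`). They are closed
under composition: `L(ι_{Y,m})⁻¹ ≫ L(g)` can be rewritten as `L(g ⊥ 𝟙) ≫ L(ι)⁻¹` because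
`ι ≫ (g ⊥ 𝟙) = g ≫ ι`, and two successive stabilisations by `Hₙ` and `Hₘ` merge into a single one
by `Hₙ₊ₘ` via the isometry `(Z ⊥ Hₙ) ⊥ Hₘ ≅ Z ⊥ Hₙ₊ₘ`. Since `𝓠(k)[W⁻¹]` is generated by the
`L(f)` and the `L(w)⁻¹` under composition, every morphism is a hyperbolic fraction.
-/

namespace CategoryTheory

lemma Functor.inv_map_comp_map_of_comp_eq {C D : Type*} [Category C] [Category D] (L : C ⥤ D)
    {X Y X' Y' : C} {a : X ⟶ Y} {b : X' ⟶ Y'} {d : X ⟶ X'} {c : Y ⟶ Y'}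
    [IsIso (L.map a)] [IsIso (L.map b)] (h : a ≫ c = d ≫ b) :
    CategoryTheory.inv (L.map a) ≫ L.map d = L.map c ≫ CategoryTheory.inv (L.map b) := by
  rw [IsIso.inv_comp_eq, ← L.map_comp_assoc, h, L.map_comp_assoc, IsIso.hom_inv_id,
    Category.comp_id]

lemma Localization.Construction.hom_induction {C : Type*} [Category C] {W : MorphismProperty C}
    (R : ∀ ⦃X Y : C⦄, (W.Q.obj X ⟶ W.Q.obj Y) → Prop)
    (hmap : ∀ ⦃X Y : C⦄ (f : X ⟶ Y), R (W.Q.map f))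
    (hinv : ∀ ⦃X Y : C⦄ (w : X ⟶ Y) (hw : W w), R (wInv w hw))
    (hcomp : ∀ ⦃X Y Z : C⦄ (φ : W.Q.obj X ⟶ W.Q.obj Y) (ψ : W.Q.obj Y ⟶ W.Q.obj Z),
      R φ → R ψ → R (φ ≫ ψ))
    {X Y : C} (φ : W.Q.obj X ⟶ W.Q.obj Y) : R φ := by
  -- structure eta makes every object `X'` of `W.Localization` definitionally `W.Q.obj X'.as.obj`
  let P : MorphismProperty W.Localization := fun X' Y' g => R (X := X'.as.obj) (Y := Y'.as.obj) g
  have : P.IsStableUnderComposition := ⟨fun f g hf hg => hcomp f g hf hg⟩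
  have hP : P = ⊤ := morphismProperty_eq_top P hmap hinv
  exact (hP ▸ trivial : P φ)

end CategoryTheory

namespace QuadraticMap.IsometryEquiv

variable {R M₁ M₂ M₃ P : Type*} [CommSemiring R] [AddCommMonoid M₁] [AddCommMonoid M₂]
  [AddCommMonoid M₃] [AddCommMonoid P] [Module R M₁] [Module R M₂] [Module R M₃] [Module R P]

def prodAssoc (Q₁ : QuadraticMap R M₁ P) (Q₂ : QuadraticMap R M₂ P) (Q₃ : QuadraticMap R M₃ P) :
    ((Q₁.prod Q₂).prod Q₃).IsometryEquiv (Q₁.prod (Q₂.prod Q₃)) where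
  toLinearEquiv := LinearEquiv.prodAssoc R M₁ M₂ M₃
  map_app' _ := (add_assoc _ _ _).symm

def prodUnique [Unique M₂] (Q₁ : QuadraticMap R M₁ P) :
    (Q₁.prod (0 : QuadraticMap R M₂ P)).IsometryEquiv Q₁ where
  toLinearEquiv := LinearEquiv.prodUnique
  map_app' _ := by simp

end QuadraticMap.IsometryEquiv

namespace StableHomology

variable {k : Type} [Field k]

def QuadHom.ofIsometryEquiv {A B : QuadSpace k} (e : A.form.IsometryEquiv B.form) : A ⟶ B :=
  ⟨e.toLinearMap, e.injective, e.map_app⟩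

def orthSumMap {A B C D : QuadSpace k} (f : A ⟶ B) (g : C ⟶ D) :
    orthSum k A C ⟶ orthSum k B D where
  toLinearMap := f.toLinearMap.prodMap g.toLinearMap
  injective := f.injective.prodMap g.injective
  compat x := congr_arg₂ (· + ·) (f.compat x.1) (g.compat x.2)

lemma orthIncl_comp_orthSumMap {A B C D : QuadSpace k} (f : A ⟶ B) (g : C ⟶ D) :
    orthIncl k A C ≫ orthSumMap f g = f ≫ orthIncl k B D :=
  QuadHom.ext (LinearMap.ext fun _ => Prod.ext rfl (map_zero g.toLinearMap))

instance : Unique (hypSpace k 0) := inferInstanceAs (Unique PUnit)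

def hypSpaceAddIsometryEquiv (n : ℕ) : ∀ m : ℕ,
    ((hypSpace k n).form.prod (hypSpace k m).form).IsometryEquiv (hypSpace k (n + m)).form
  | 0 => QuadraticMap.IsometryEquiv.prodUnique _
  | m + 1 => (QuadraticMap.IsometryEquiv.prodAssoc _ _ _).symm.trans
      ((hypSpaceAddIsometryEquiv n m).prod (QuadraticMap.IsometryEquiv.refl _))

def hypSpaceReassoc (Z : QuadSpace k) (n m : ℕ) :
    orthSum k (orthSum k Z (hypSpace k n)) (hypSpace k m) ⟶ orthSum k Z (hypSpace k (n + m)) :=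
  QuadHom.ofIsometryEquiv ((QuadraticMap.IsometryEquiv.prodAssoc _ _ _).trans
    ((QuadraticMap.IsometryEquiv.refl Z.form).prod (hypSpaceAddIsometryEquiv n m)))

lemma orthIncl_comp_orthIncl_comp_hypSpaceReassoc (Z : QuadSpace k) (n m : ℕ) :
    orthIncl k Z (hypSpace k n) ≫ orthIncl k _ (hypSpace k m) ≫ hypSpaceReassoc Z n m =
      orthIncl k Z (hypSpace k (n + m)) :=
  QuadHom.ext (LinearMap.ext fun _ => Prod.ext rfl (map_zero (hypSpaceAddIsometryEquiv n m)))

instance (D : QuadSpace k) (m : ℕ) : IsIso ((Wq k).Q.map (orthIncl k D (hypSpace k m))) :=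
  MorphismProperty.Q_inverts (Wq k) _ (IsHypIncl.mk D m)

def IsHypFraction {X Y : QuadSpace k} (φ : (Wq k).Q.obj X ⟶ (Wq k).Q.obj Y) : Prop :=
  ∃ (m : ℕ) (f : X ⟶ orthSum k Y (hypSpace k m)),
    φ = (Wq k).Q.map f ≫ inv ((Wq k).Q.map (orthIncl k Y (hypSpace k m)))

lemma isHypFraction_map {X Y : QuadSpace k} (f : X ⟶ Y) : IsHypFraction ((Wq k).Q.map f) :=
  ⟨0, f ≫ orthIncl k Y (hypSpace k 0), by simp⟩

lemma isHypFraction_inv_map_orthIncl (D : QuadSpace k) (m : ℕ) :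
    IsHypFraction (inv ((Wq k).Q.map (orthIncl k D (hypSpace k m)))) :=
  ⟨m, 𝟙 _, by simp⟩

lemma isHypFraction_wInv {X Y : QuadSpace k} (w : X ⟶ Y) (hw : Wq k w) :
    IsHypFraction (Localization.Construction.wInv w hw) := by
  rw [Localization.Construction.wInv_eq_isoOfHom_inv]
  cases hw with
  | mk m => exact isHypFraction_inv_map_orthIncl X m

lemma IsHypFraction.comp {X Y Z : QuadSpace k} {φ : (Wq k).Q.obj X ⟶ (Wq k).Q.obj Y}
    {ψ : (Wq k).Q.obj Y ⟶ (Wq k).Q.obj Z} (hφ : IsHypFraction φ) (hψ : IsHypFraction ψ) :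
    IsHypFraction (φ ≫ ψ) := by
  obtain ⟨m, f, rfl⟩ := hφ
  obtain ⟨n, g, rfl⟩ := hψ
  refine ⟨n + m, f ≫ orthSumMap g (𝟙 _) ≫ hypSpaceReassoc Z n m, ?_⟩
  have slide : inv ((Wq k).Q.map (orthIncl k Y (hypSpace k m))) ≫ (Wq k).Q.map g =
      (Wq k).Q.map (orthSumMap g (𝟙 _)) ≫
        inv ((Wq k).Q.map (orthIncl k (orthSum k Z (hypSpace k n)) (hypSpace k m))) :=
    Functor.inv_map_comp_map_of_comp_eq _ (orthIncl_comp_orthSumMap _ _)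
  have merge : inv ((Wq k).Q.map (orthIncl k (orthSum k Z (hypSpace k n)) (hypSpace k m))) ≫
      inv ((Wq k).Q.map (orthIncl k Z (hypSpace k n))) =
      (Wq k).Q.map (hypSpaceReassoc Z n m) ≫
        inv ((Wq k).Q.map (orthIncl k Z (hypSpace k (n + m)))) := by
    rw [IsIso.eq_comp_inv, ← orthIncl_comp_orthIncl_comp_hypSpaceReassoc, Functor.map_comp,
      Functor.map_comp]
    simp
  simp only [Functor.map_comp, Category.assoc]
  rw [reassoc_of% slide, merge]

theorem isHypFraction {X Y : QuadSpace k} (φ : (Wq k).Q.obj X ⟶ (Wq k).Q.obj Y) :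
    IsHypFraction φ :=
  Localization.Construction.hom_induction (fun _ _ => IsHypFraction)
    (fun _ _ => isHypFraction_map)
    (fun _ _ => isHypFraction_wInv) (fun _ _ _ _ _ => IsHypFraction.comp) φ

/-- Every morphism `L(X) → L(Y)` of the localized category `𝓠(k)[W⁻¹]` can be written
as `(L ι_Y)⁻¹ ∘ L(f)` for some morphism `f : X → Y ⊥ H` of `𝓠(k)` with `H` hyperbolic. -/
theorem localization_morphism_factorization
    (k : Type) [Field k] (X Y : QuadSpace k)
    (φ : (Wq k).Q.obj X ⟶ (Wq k).Q.obj Y) :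
    ∃ (m : ℕ) (f : X ⟶ orthSum k Y (hypSpace k m)),
      letI : IsIso ((Wq k).Q.map (orthIncl k Y (hypSpace k m))) :=
        MorphismProperty.Q_inverts (Wq k) _ (IsHypIncl.mk Y m)
      φ = (Wq k).Q.map f ≫ inv ((Wq k).Q.map (orthIncl k Y (hypSpace k m))) :=
  isHypFraction φ

end StableHomology
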